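/- Let G be a König–Egerváry graph. If G has a Sachs subgraph (i.e., a spanning subgraph each of whose connected components is a single edge or a cycle), then G has a perfect matching. -/

import Mathlib

/-! ## Basic matching terminology -/

/-- `M` is a matching of the simple graph `G`: a set of edges of `G` that are pairwise
non-adjacent, i.e. no two distinct edges of `M` share a vertex. -/
def IsMatching {V : Type} (G : SimpleGraph V) (M : Finset (Sym2 V)) : Prop :=
  (∀ e ∈ M, e ∈ G.edgeSet) ∧
  ∀ e ∈ M, ∀ f ∈ M, e ≠ f → ∀ v : V, ¬(v ∈ e ∧ v ∈ f)

/-- A vertex `v` is saturated by the edge set `M` if it is an endpoint of some edge of `M`. -/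
def Saturates {V : Type} (M : Finset (Sym2 V)) (v : V) : Prop := ∃ e ∈ M, v ∈ e

/-- `M` is a perfect matching of `G`: a matching saturating every vertex of `G`. -/
def IsPerfectMatching {V : Type} (G : SimpleGraph V) (M : Finset (Sym2 V)) : Prop :=
  IsMatching G M ∧ ∀ v : V, Saturates M v

/-- The matching number `μ(G)`: the maximum cardinality of a matching of `G`. -/
noncomputable def matchNum {V : Type} (G : SimpleGraph V) : ℕ :=
  sSup {n | ∃ M : Finset (Sym2 V), IsMatching G M ∧ M.card = n}

/-- The independence number `α(G)`: the maximum cardinality of a set of pairwise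
non-adjacent vertices. -/
noncomputable def indepNum {V : Type} (G : SimpleGraph V) : ℕ :=
  sSup {n | ∃ S : Finset V, (∀ u ∈ S, ∀ v ∈ S, ¬ G.Adj u v) ∧ S.card = n}

/-- `G` is a König–Egerváry graph if `α(G) + μ(G) = |V(G)|`. -/
def IsKonigEgervary {V : Type} [Fintype V] (G : SimpleGraph V) : Prop :=
  indepNum G + matchNum G = Fintype.card V

/-! ## Degrees and graphs whose components are single edges or cycles -/

/-- The degree of `v` in `H`, as the cardinality of its neighbour set. -/
noncomputable def ndeg {V : Type} (H : SimpleGraph V) (v : V) : ℕ := (H.neighborSet v).ncard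

/-- Every connected component of (the finite simple graph) `H` is a single edge (a copy of
`K₂`) or a cycle: every vertex has degree `1` or `2`, and the degree is constant on each
connected component (a finite connected `1`-regular graph is `K₂`, and a finite connected
`2`-regular graph is a cycle). -/
def ComponentsAreEdgesOrCycles {V : Type} (H : SimpleGraph V) : Prop :=
  (∀ v : V, ndeg H v = 1 ∨ ndeg H v = 2) ∧
  ∀ ⦃u v : V⦄, H.Adj u v → ndeg H u = ndeg H v

/-- `H` is a Sachs subgraph of `G`: a spanning subgraph each of whose connected components
is a single edge or a cycle. -/
def IsSachsSubgraph {V : Type} (G H : SimpleGraph V) : Prop :=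
  H ≤ G ∧ ComponentsAreEdgesOrCycles H

/-- `H` has a connected component which is an odd cycle: a component all of whose vertices
have degree `2` (hence a cycle) with an odd number of vertices. -/
def HasOddCycleComponent {V : Type} (H : SimpleGraph V) : Prop :=
  ∃ c : H.ConnectedComponent, (∀ v ∈ c.supp, ndeg H v = 2) ∧ Odd c.supp.ncard

/-- Degree of a vertex in a subgraph. -/
noncomputable def subNdeg {V : Type} {G : SimpleGraph V} (H : G.Subgraph) (v : V) : ℕ :=
  (H.neighborSet v).ncard

/-- Every connected component of the subgraph `H` of `G` is a single edge or a cycle. -/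
def SubComponentsAreEdgesOrCycles {V : Type} {G : SimpleGraph V} (H : G.Subgraph) : Prop :=
  (∀ v ∈ H.verts, subNdeg H v = 1 ∨ subNdeg H v = 2) ∧
  ∀ ⦃u v : V⦄, H.Adj u v → subNdeg H u = subNdeg H v

/-- The subgraph `H` of `G` has a connected component which is an odd cycle. -/
def SubHasOddCycleComponent {V : Type} {G : SimpleGraph V} (H : G.Subgraph) : Prop :=
  ∃ c : H.coe.ConnectedComponent,
    (∀ v ∈ c.supp, subNdeg H ↑v = 2) ∧ Odd c.supp.ncard

/-- `prk G`: the maximum order of a subgraph of `G` each of whose connected components is a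
single edge or a cycle (`0` for an edgeless graph). -/
noncomputable def prk {V : Type} (G : SimpleGraph V) : ℕ :=
  sSup {n | ∃ H : G.Subgraph, SubComponentsAreEdgesOrCycles H ∧ H.verts.ncard = n}

/-- `X` is a vertex cover of `H`: every edge of `H` has an endpoint in `X`. -/
def IsVertexCover {V : Type} (H : SimpleGraph V) (X : Set V) : Prop :=
  ∀ ⦃u v : V⦄, H.Adj u v → u ∈ X ∨ v ∈ X

/-! ## Symmetric differences of matchings -/

/-- The graph on `V` whose edges are the symmetric difference `M₁ △ M₂`. -/
def symmDiffGraph {V : Type} [DecidableEq V] (M₁ M₂ : Finset (Sym2 V)) : SimpleGraph V :=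
  SimpleGraph.fromEdgeSet ↑(symmDiff M₁ M₂)

/-- On the vertex set `S`, consecutive edges of `H` alternate between `M₁` and `M₂`. -/
def AltOn {V : Type} (H : SimpleGraph V) (M₁ M₂ : Finset (Sym2 V)) (S : Set V) : Prop :=
  ∀ ⦃u v w : V⦄, v ∈ S → H.Adj u v → H.Adj v w → u ≠ w →
    (s(u, v) ∈ M₁ ∧ s(v, w) ∈ M₂) ∨ (s(u, v) ∈ M₂ ∧ s(v, w) ∈ M₁)

/-! ## Perfect flowers -/

/-- `(C, P)` is an `M`-perfect flower: `C` is an odd cycle of length `2k+1` containing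
exactly `k` edges of `M`, and `P` is a nontrivial `M`-alternating path whose first and last
edges belong to `M`, such that `V(C) ∩ V(P)` consists exactly of the common endpoint `a`. -/
structure IsPerfectFlower {V : Type} [DecidableEq V] (G : SimpleGraph V)
    (M : Finset (Sym2 V)) {a b : V} (C : G.Walk a a) (P : G.Walk a b) : Prop where
  cycle : C.IsCycle
  odd : Odd C.length
  blossom : C.edges.countP (fun e => e ∈ M) = C.length / 2
  path : P.IsPath
  nontrivial : 0 < P.length
  alternating : List.Chain' (fun e f => e ∈ M ↔ f ∉ M) P.edges
  firstEdge : ∀ e ∈ P.edges.head?, e ∈ M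
  lastEdge : ∀ e ∈ P.edges.getLast?, e ∈ M
  meet : ∀ v : V, (v ∈ C.support ∧ v ∈ P.support) ↔ v = a

/-- The perfect-flower part `PF(G)`: vertices belonging to some `M`-perfect flower, for some
maximum matching `M` of `G`. -/
def PF {V : Type} [DecidableEq V] (G : SimpleGraph V) : Set V :=
  {x | ∃ M : Finset (Sym2 V), IsMatching G M ∧ M.card = matchNum G ∧
    ∃ (a b : V) (C : G.Walk a a) (P : G.Walk a b),
      IsPerfectFlower G M C P ∧ (x ∈ C.support ∨ x ∈ P.support)}

/-- The perfect-flower-free part `PFF(G) = V(G) \ PF(G)`. -/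
def PFF {V : Type} [DecidableEq V] (G : SimpleGraph V) : Set V := (PF G)ᶜ

/-! ## Determinant and permanent of a graph -/

/-- The determinant of the adjacency matrix of `G` over `ℤ`. -/
noncomputable def detG {V : Type} [Fintype V] [DecidableEq V] (G : SimpleGraph V) : ℤ :=
  letI := Classical.decRel G.Adj
  (SimpleGraph.adjMatrix ℤ G).det

/-- The permanent of the adjacency matrix of `G` over `ℤ`. -/
noncomputable def permG {V : Type} [Fintype V] [DecidableEq V] (G : SimpleGraph V) : ℤ :=
  letI := Classical.decRel G.Adj
  (SimpleGraph.adjMatrix ℤ G).permanent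

/-- `det(G[X])`, the determinant of the adjacency matrix of the induced subgraph `G[X]`
(equal to `1` when `X = ∅`, the determinant of the empty matrix). -/
noncomputable def detInd {V : Type} [Fintype V] [DecidableEq V]
    (G : SimpleGraph V) (X : Set V) : ℤ :=
  letI : Fintype ↥X := X.toFinite.fintype
  detG (G.induce X)

/-- `perm(G[X])`, the permanent of the adjacency matrix of the induced subgraph `G[X]`
(equal to `1` when `X = ∅`). -/
noncomputable def permInd {V : Type} [Fintype V] [DecidableEq V]
    (G : SimpleGraph V) (X : Set V) : ℤ :=
  letI : Fintype ↥X := X.toFinite.fintype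
  permG (G.induce X)

/-! ## Auxiliary constructions -/

/-- The subgraph of `G` spanned by the edges of a matching `M`: its vertices are the
endpoints of edges of `M` and its edges are exactly the edges of `M`. -/
def matchingSubgraph {V : Type} (G : SimpleGraph V) (M : Finset (Sym2 V))
    (hM : ∀ e ∈ M, e ∈ G.edgeSet) : G.Subgraph where
  verts := {v | ∃ e ∈ M, v ∈ e}
  Adj u v := s(u, v) ∈ M
  adj_sub h := G.mem_edgeSet.mp (hM _ h)
  edge_vert h := ⟨_, h, Sym2.mem_mk_left _ _⟩
  symm := ⟨fun u v (h : s(u, v) ∈ M) => by show s(v, u) ∈ M; rwa [Sym2.eq_swap]⟩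

/-- The restriction of an edge set `M` to the edges with both endpoints in `X`. -/
noncomputable def restrictEdges {V : Type} (M : Finset (Sym2 V)) (X : Set V) :
    Finset (Sym2 V) :=
  letI := Classical.decPred fun e : Sym2 V => ∀ v ∈ e, v ∈ X
  M.filter fun e => ∀ v ∈ e, v ∈ X

/-- `M` is a perfect matching of the induced subgraph `G[X]`: a matching of `G` whose edges
have both endpoints in `X`, saturating every vertex of `X`. -/
def IsPerfectMatchingOn {V : Type} (G : SimpleGraph V) (X : Set V)
    (M : Finset (Sym2 V)) : Prop :=
  (∀ e ∈ M, e ∈ G.edgeSet ∧ ∀ v ∈ e, v ∈ X) ∧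
  (∀ e ∈ M, ∀ f ∈ M, e ≠ f → ∀ v : V, ¬(v ∈ e ∧ v ∈ f)) ∧
  ∀ v ∈ X, ∃ e ∈ M, v ∈ e


/-! A Sachs subgraph `H` has positive degrees, constant along each edge, so it satisfies Hall's
condition `|A| ≤ |N_H(A)|`. An independent set `S` of `G` is independent in `H`, so
`N_H(S) ⊆ V \ S` and `2α ≤ n`. With `α + μ = n` this gives `2μ ≥ n`, so the edges of a maximum
matching cover every vertex. -/

namespace SimpleGraph

variable {V : Type} [DecidableEq V] (H : SimpleGraph V) [H.LocallyFinite]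

/-- Weighting each edge `aw` by `1 / deg w = 1 / deg a` gives every vertex of `A` total weight
one, while every vertex of the neighbourhood of `A` receives at most one. -/
theorem card_le_card_biUnion_neighborFinset (hpos : ∀ v, 0 < H.degree v)
    (hconst : ∀ ⦃u v⦄, H.Adj u v → H.degree u = H.degree v) (A : Finset V) :
    A.card ≤ (A.biUnion (H.neighborFinset ·)).card := by
  classical
  set N := A.biUnion (H.neighborFinset ·)
  have hweight : ∀ a ∈ A, ∑ w ∈ H.neighborFinset a, (1 / H.degree w : ℚ) = 1 := by
    intro a _
    rw [Finset.sum_congr rfl fun w hw => by rw [← hconst ((H.mem_neighborFinset a w).mp hw)],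
      Finset.sum_const, card_neighborFinset_eq_degree, nsmul_eq_mul]
    have := hpos a
    field_simp
  have hreceive : ∀ w ∈ N, ∑ _a ∈ A.filter (H.Adj · w), (1 / H.degree w : ℚ) ≤ 1 := by
    intro w _
    have hle : (A.filter (H.Adj · w)).card ≤ H.degree w := by
      rw [← card_neighborFinset_eq_degree]
      exact Finset.card_le_card fun a ha =>
        (H.mem_neighborFinset w a).mpr (Finset.mem_filter.mp ha).2.symm
    rw [Finset.sum_const, nsmul_eq_mul, mul_one_div]
    exact div_le_one_of_le₀ (by exact_mod_cast hle) (Nat.cast_nonneg _)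
  have hswap : ∑ a ∈ A, ∑ w ∈ H.neighborFinset a, (1 / H.degree w : ℚ) =
      ∑ w ∈ N, ∑ _a ∈ A.filter (H.Adj · w), (1 / H.degree w : ℚ) :=
    Finset.sum_comm' fun a w => by
      simp only [N, Finset.mem_biUnion, Finset.mem_filter, mem_neighborFinset]
      exact ⟨fun h => ⟨h, a, h⟩, And.left⟩
  have : (A.card : ℚ) ≤ N.card := by
    calc (A.card : ℚ) = ∑ a ∈ A, ∑ w ∈ H.neighborFinset a, (1 / H.degree w : ℚ) := by
          rw [Finset.sum_congr rfl hweight, Finset.sum_const, nsmul_one]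
      _ = ∑ w ∈ N, ∑ _a ∈ A.filter (H.Adj · w), (1 / H.degree w : ℚ) := hswap
      _ ≤ ∑ _w ∈ N, (1 : ℚ) := Finset.sum_le_sum hreceive
      _ = N.card := by rw [Finset.sum_const, nsmul_one]
  exact_mod_cast this

theorem two_mul_card_le_card_of_isIndepSet [Fintype V] (hpos : ∀ v, 0 < H.degree v)
    (hconst : ∀ ⦃u v⦄, H.Adj u v → H.degree u = H.degree v) {S : Finset V}
    (hS : H.IsIndepSet S) : 2 * S.card ≤ Fintype.card V := by
  have hN : S.biUnion (H.neighborFinset ·) ⊆ Sᶜ := by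
    intro w hw
    obtain ⟨a, ha, haw⟩ := Finset.mem_biUnion.mp hw
    rw [mem_neighborFinset] at haw
    exact Finset.mem_compl.mpr fun hwS => hS ha hwS haw.ne haw
  have := (H.card_le_card_biUnion_neighborFinset hpos hconst S).trans (Finset.card_le_card hN)
  rw [Finset.card_compl] at this
  omega

end SimpleGraph

theorem ndeg_eq_degree {V : Type} (H : SimpleGraph V) [Fintype V] [DecidableRel H.Adj]
    (v : V) : ndeg H v = H.degree v := by
  rw [ndeg, Set.ncard_eq_toFinset_card', Set.toFinset_card,
    SimpleGraph.card_neighborSet_eq_degree]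

theorem ComponentsAreEdgesOrCycles.two_mul_card_le_card_of_isIndepSet {V : Type} [Fintype V]
    {H : SimpleGraph V} (hH : ComponentsAreEdgesOrCycles H) {S : Finset V}
    (hS : H.IsIndepSet S) : 2 * S.card ≤ Fintype.card V := by
  classical
  obtain ⟨hdeg, hconst⟩ := hH
  simp only [ndeg_eq_degree] at hdeg hconst
  exact H.two_mul_card_le_card_of_isIndepSet (fun v => by rcases hdeg v with h | h <;> omega)
    hconst hS

theorem exists_indep_card_eq_indepNum {V : Type} [Fintype V] (G : SimpleGraph V) :
    ∃ S : Finset V, (∀ u ∈ S, ∀ v ∈ S, ¬ G.Adj u v) ∧ S.card = indepNum G :=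
  Nat.sSup_mem (s := {n | ∃ S : Finset V, (∀ u ∈ S, ∀ v ∈ S, ¬ G.Adj u v) ∧ S.card = n})
    ⟨0, ∅, by simp, rfl⟩ ⟨Fintype.card V, by rintro _ ⟨S, -, rfl⟩; exact S.card_le_univ⟩

theorem exists_isMatching_card_eq_matchNum {V : Type} [Fintype V] (G : SimpleGraph V) :
    ∃ M : Finset (Sym2 V), IsMatching G M ∧ M.card = matchNum G := by
  classical
  exact Nat.sSup_mem (s := {n | ∃ M : Finset (Sym2 V), IsMatching G M ∧ M.card = n})
    ⟨0, ∅, ⟨by simp, by simp⟩, rfl⟩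
    ⟨Fintype.card (Sym2 V), by rintro _ ⟨M, -, rfl⟩; exact M.card_le_univ⟩

namespace IsMatching

variable {V : Type} [DecidableEq V] {G : SimpleGraph V} {M : Finset (Sym2 V)}

theorem card_biUnion_toFinset (hM : IsMatching G M) :
    (M.biUnion Sym2.toFinset).card = 2 * M.card := by
  rw [Finset.card_biUnion fun e he f hf hef => Finset.disjoint_left.mpr fun v hve hvf =>
      hM.2 e he f hf hef v ⟨Sym2.mem_toFinset.mp hve, Sym2.mem_toFinset.mp hvf⟩,
    Finset.sum_congr rfl fun e he =>
      Sym2.card_toFinset_of_not_isDiag e (G.not_isDiag_of_mem_edgeSet (hM.1 e he)),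
    Finset.sum_const, smul_eq_mul, mul_comm]

theorem saturates_of_card_le_two_mul [Fintype V] (hM : IsMatching G M)
    (hcard : Fintype.card V ≤ 2 * M.card) (v : V) : Saturates M v := by
  have huniv : M.biUnion Sym2.toFinset = Finset.univ :=
    Finset.eq_univ_of_card _
      (le_antisymm (Finset.card_le_univ _) (hM.card_biUnion_toFinset ▸ hcard))
  obtain ⟨e, he, hve⟩ := Finset.mem_biUnion.mp (huniv ▸ Finset.mem_univ v)
  exact ⟨e, he, Sym2.mem_toFinset.mp hve⟩

end IsMatching

/-- A König–Egerváry graph with a Sachs subgraph has a perfect matching. -/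
theorem stmt6 {V : Type} [Fintype V] (G : SimpleGraph V) (hG : IsKonigEgervary G)
    (hex : ∃ H : SimpleGraph V, IsSachsSubgraph G H) :
    ∃ M : Finset (Sym2 V), IsPerfectMatching G M := by
  classical
  obtain ⟨H, hHG, hH⟩ := hex
  obtain ⟨S, hSind, hScard⟩ := exists_indep_card_eq_indepNum G
  obtain ⟨M, hM, hMcard⟩ := exists_isMatching_card_eq_matchNum G
  have hS : 2 * S.card ≤ Fintype.card V :=
    hH.two_mul_card_le_card_of_isIndepSet fun u hu v hv _ huv => hSind u hu v hv (hHG huv)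
  have hKE : S.card + M.card = Fintype.card V := hScard ▸ hMcard ▸ hG
  exact ⟨M, hM, hM.saturates_of_card_le_two_mul (by omega)⟩
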